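/- Under the conditional independence assumption Z ⟂ R | (Y, A), the missing-data outcome distribution is recovered from the complete-case distribution via the odds ratio: f(y | R=0, a, z) = OR(a,y) · f(y | R=1, a, z) / E[OR(a,Y) | R=1, A=a, Z=z], where E[OR(a,Y) | R=1, A=a, Z=z] = Σ_y OR(a,y) · f(y | R=1, a, z). -/

import Mathlib

open Finset

variable {A Y Z : Type} [Fintype A] [Fintype Y] [Fintype Z]

/-- Marginal mass `f(a, y)` of the joint mass function `f` on `(A, Y, Z, R)`,
with `R` encoded by `Bool` (`true` meaning `R = 1`). -/
noncomputable def mAY (f : A → Y → Z → Bool → ℝ) (a : A) (y : Y) : ℝ :=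
  ∑ z, ∑ r, f a y z r

/-- Marginal mass `f(a, y, z)`. -/
noncomputable def mAYZ (f : A → Y → Z → Bool → ℝ) (a : A) (y : Y) (z : Z) : ℝ :=
  ∑ r, f a y z r

/-- Marginal mass `f(a, y, r)`. -/
noncomputable def mAYR (f : A → Y → Z → Bool → ℝ) (a : A) (y : Y) (r : Bool) : ℝ :=
  ∑ z, f a y z r

/-- Marginal mass `f(a)`. -/
noncomputable def mA (f : A → Y → Z → Bool → ℝ) (a : A) : ℝ :=
  ∑ y, ∑ z, ∑ r, f a y z r

/-- Marginal mass `f(a, r)`. -/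
noncomputable def mAR (f : A → Y → Z → Bool → ℝ) (a : A) (r : Bool) : ℝ :=
  ∑ y, ∑ z, f a y z r

/-- Marginal mass `f(a, z)`. -/
noncomputable def mAZ (f : A → Y → Z → Bool → ℝ) (a : A) (z : Z) : ℝ :=
  ∑ y, ∑ r, f a y z r

/-- Marginal mass `f(a, z, r)`. -/
noncomputable def mAZR (f : A → Y → Z → Bool → ℝ) (a : A) (z : Z) (r : Bool) : ℝ :=
  ∑ y, f a y z r

/-- The shadow-variable assumption (a): the conditional independence `Z ⟂ R | (Y, A)`,
expressed via joint masses as `f(a,y,z,r) · f(a,y) = f(a,y,z) · f(a,y,r)`,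
i.e. `f(z, r | y, a) = f(z | y, a) · f(r | y, a)`. -/
def CondIndepZR (f : A → Y → Z → Bool → ℝ) : Prop :=
  ∀ (a : A) (y : Y) (z : Z) (r : Bool),
    f a y z r * mAY f a y = mAYZ f a y z * mAYR f a y r

/-- The odds-ratio function
`OR(a,y) = [f(R=0 | a, y) · f(R=1 | a, y₁)] / [f(R=1 | a, y) · f(R=0 | a, y₁)]`,
with reference value `y₁`. -/
noncomputable def OddsRatio (f : A → Y → Z → Bool → ℝ) (y₁ : Y) (a : A) (y : Y) : ℝ :=
  ((mAYR f a y false / mAY f a y) * (mAYR f a y₁ true / mAY f a y₁)) /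
    ((mAYR f a y true / mAY f a y) * (mAYR f a y₁ false / mAY f a y₁))

/-- The conditional expectation of the odds ratio among complete cases given `A = a, Z = z`:
`E[OR(a,Y) | R=1, A=a, Z=z] = Σ_y OR(a,y) · f(y | R=1, a, z)`. -/
noncomputable def expORz (f : A → Y → Z → Bool → ℝ) (y₁ : Y) (a : A) (z : Z) : ℝ :=
  ∑ y, OddsRatio f y₁ a y * (f a y z true / mAZR f a z true)

/-! Since `Z ⟂ R | (Y, A)`, the ratio `f(a,y,z,0) / f(a,y,z,1)` equals `f(a,y,0) / f(a,y,1)`,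
so `OR(a,y) · f(a,y,z,1)` is a multiple of `f(a,y,z,0)` by the constant
`f(a,y₁,1) / f(a,y₁,0)`, which does not depend on `y`. Normalising both sides over `y` gives
the formula, the constant cancelling. -/

omit [Fintype A] [Fintype Y] in
theorem CondIndepZR.mul_mAYR_comm {f : A → Y → Z → Bool → ℝ} (hci : CondIndepZR f)
    {a : A} {y : Y} (hy : mAY f a y ≠ 0) (z : Z) (r r' : Bool) :
    f a y z r * mAYR f a y r' = f a y z r' * mAYR f a y r := by
  apply mul_right_cancel₀ hy
  calc f a y z r * mAYR f a y r' * mAY f a y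
      = f a y z r * mAY f a y * mAYR f a y r' := by ring
    _ = mAYZ f a y z * mAYR f a y r * mAYR f a y r' := by rw [hci]
    _ = mAYZ f a y z * mAYR f a y r' * mAYR f a y r := by ring
    _ = f a y z r' * mAY f a y * mAYR f a y r := by rw [hci]
    _ = f a y z r' * mAYR f a y r * mAY f a y := by ring

omit [Fintype A] [Fintype Y] in
theorem oddsRatio_eq {f : A → Y → Z → Bool → ℝ} {y₁ : Y} {a : A} {y : Y}
    (hy : mAY f a y ≠ 0) (hy₁ : mAY f a y₁ ≠ 0) :
    OddsRatio f y₁ a y = mAYR f a y false * mAYR f a y₁ true /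
      (mAYR f a y true * mAYR f a y₁ false) := by
  rw [OddsRatio, div_mul_div_comm, div_mul_div_comm,
    div_div_div_cancel_right₀ (mul_ne_zero hy hy₁)]

omit [Fintype A] [Fintype Y] in
theorem CondIndepZR.oddsRatio_mul {f : A → Y → Z → Bool → ℝ} (hci : CondIndepZR f)
    (y₁ : Y) {a : A} {y : Y} (hy : mAY f a y ≠ 0) (hy₁ : mAY f a y₁ ≠ 0)
    (hR : mAYR f a y true ≠ 0) (hR₁ : mAYR f a y₁ false ≠ 0) (z : Z) :
    OddsRatio f y₁ a y * f a y z true =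
      mAYR f a y₁ true / mAYR f a y₁ false * f a y z false := by
  rw [oddsRatio_eq hy hy₁]
  field_simp
  linear_combination mAYR f a y₁ true * hci.mul_mAYR_comm hy z true false

theorem div_sum_eq_mul_div_sum_div_sum {ι : Type*} [Fintype ι] {p q w : ι → ℝ} {c : ℝ}
    (hc : c ≠ 0) (hp : ∑ j, p j ≠ 0) (hq : ∑ j, q j ≠ 0) (hwpq : ∀ j, w j * p j = c * q j)
    (i : ι) :
    q i / ∑ j, q j = w i * (p i / ∑ j, p j) / ∑ j, w j * (p j / ∑ k, p k) := by
  have hsum : ∑ j, w j * (p j / ∑ k, p k) = c * (∑ j, q j) / ∑ k, p k := by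
    simp only [← mul_div_assoc, hwpq, ← Finset.sum_div, ← Finset.mul_sum]
  rw [hsum, ← mul_div_assoc, hwpq]
  field_simp

omit [Fintype A] [Fintype Y] in
theorem mAY_pos [Nonempty Z] {f : A → Y → Z → Bool → ℝ} (hpos : ∀ a y z r, 0 < f a y z r)
    (a : A) (y : Y) : 0 < mAY f a y :=
  sum_pos (fun z _ => sum_pos (fun r _ => hpos a y z r) univ_nonempty) univ_nonempty

omit [Fintype A] [Fintype Y] in
theorem mAYR_pos [Nonempty Z] {f : A → Y → Z → Bool → ℝ} (hpos : ∀ a y z r, 0 < f a y z r)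
    (a : A) (y : Y) (r : Bool) : 0 < mAYR f a y r :=
  sum_pos (fun z _ => hpos a y z r) univ_nonempty

omit [Fintype A] [Fintype Z] in
theorem mAZR_pos [Nonempty Y] {f : A → Y → Z → Bool → ℝ} (hpos : ∀ a y z r, 0 < f a y z r)
    (a : A) (z : Z) (r : Bool) : 0 < mAZR f a z r :=
  sum_pos (fun y _ => hpos a y z r) univ_nonempty

theorem missing_data_law_of_condIndep_general
    (f : A → Y → Z → Bool → ℝ)
    (hpos : ∀ (a : A) (y : Y) (z : Z) (r : Bool), 0 < f a y z r)
    (hci : CondIndepZR f) (y₁ : Y) :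
    ∀ (a : A) (y : Y) (z : Z),
      f a y z false / mAZR f a z false =
        OddsRatio f y₁ a y * (f a y z true / mAZR f a z true) / expORz f y₁ a z := by
  intro a y z
  have : Nonempty Y := ⟨y⟩
  have : Nonempty Z := ⟨z⟩
  have hreweight : ∀ y', OddsRatio f y₁ a y' * f a y' z true =
      mAYR f a y₁ true / mAYR f a y₁ false * f a y' z false := fun y' =>
    hci.oddsRatio_mul y₁ (mAY_pos hpos a y').ne' (mAY_pos hpos a y₁).ne'
      (mAYR_pos hpos a y' true).ne' (mAYR_pos hpos a y₁ false).ne' z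
  unfold expORz mAZR
  exact div_sum_eq_mul_div_sum_div_sum
    (div_pos (mAYR_pos hpos a y₁ true) (mAYR_pos hpos a y₁ false)).ne'
    (mAZR_pos hpos a z true).ne' (mAZR_pos hpos a z false).ne' hreweight y

/-- equation (3.8): under the shadow-variable conditional independence
`Z ⟂ R | (Y, A)`, the missing-data outcome distribution is recovered from the
complete-case distribution via the odds ratio:
`f(y | R=0, a, z) = OR(a,y) · f(y | R=1, a, z) / E[OR(a,Y) | R=1, A=a, Z=z]`. -/
theorem missing_data_law_of_condIndep
    (f : A → Y → Z → Bool → ℝ)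
    (hpos : ∀ (a : A) (y : Y) (z : Z) (r : Bool), 0 < f a y z r)
    (hsum : ∑ a, ∑ y, ∑ z, ∑ r, f a y z r = 1)
    (hci : CondIndepZR f) (y₁ : Y) :
    ∀ (a : A) (y : Y) (z : Z),
      f a y z false / mAZR f a z false =
        OddsRatio f y₁ a y * (f a y z true / mAZR f a z true) / expORz f y₁ a z :=
  missing_data_law_of_condIndep_general f hpos hci y₁
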